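/- For every n, q ∈ ℤ⁺, every arena A with n nodes, every total preorder ≼ on its node set V, and every q-state strategy S₁ of Player 0, there exists a chromatic (qn+1)^n-state strategy S₂ of Player 0 such that for every v ∈ V: col(S₂, v) ⊆ ⋃_{u ∈ V, v ≼ u} col(S₁, u). -/

import Mathlib

/-- An arena over a set of colors `C`. -/
structure Arena (C : Type) where
  V : Type
  E : Type
  finV : Fintype V
  finE : Fintype E
  /-- `isP0 v` means node `v` is controlled by Player 0. -/
  isP0 : V → Prop
  source : E → V
  target : E → V
  col : E → C
  out : ∀ v : V, ∃ e : E, source e = v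

namespace Arena

variable {C : Type} (A : Arena C)

/-- `PathFrom v es w` : the edge list `es` forms a finite path from `v` to `w`. -/
def PathFrom : A.V → List A.E → A.V → Prop
  | v, [], w => v = w
  | v, e :: es, w => A.source e = v ∧ PathFrom (A.target e) es w

/-- The endpoint of the edge list `es` started at `v`. -/
def ptarget (v : A.V) (es : List A.E) : A.V := es.foldl (fun _ e => A.target e) v

/-- A strategy of Player 0: given the starting node and the finite play so far,
it outputs the next edge. -/
def Strategy (A : Arena C) : Type := A.V → List A.E → A.E

/-- A legal strategy moves along an edge leaving the current node. -/
def IsStrategy (S : A.Strategy) : Prop :=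
  ∀ v es, A.source (S v es) = A.ptarget v es

/-- The finite edge list `es`, viewed as a play from `v`, is consistent with `S`:
at every prefix ending in a Player-0 node, the next edge is the one chosen by `S`. -/
def ConsFrom (S : A.Strategy) (v : A.V) (es : List A.E) : Prop :=
  ∀ p e r, es = p ++ e :: r → A.isP0 (A.ptarget v p) → e = S v p

/-- `P` is an infinite path starting at `v`. -/
def InfPlay (v : A.V) (P : ℕ → A.E) : Prop :=
  A.source (P 0) = v ∧ ∀ i, A.target (P i) = A.source (P (i + 1))

/-- The length-`k` prefix of an infinite play, as a list. -/
def prefixList (P : ℕ → A.E) (k : ℕ) : List A.E := List.ofFn (fun i : Fin k => P i)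

/-- `colSet S v` is the set of color sequences of infinite plays from `v` consistent with `S`. -/
def colSet (S : A.Strategy) (v : A.V) : Set (ℕ → C) :=
  { γ | ∃ P : ℕ → A.E, A.InfPlay v P ∧ (∀ k, A.ConsFrom S v (A.prefixList P k)) ∧
      γ = fun i => A.col (P i) }

/-- `colSetU S U = ⋃ v ∈ U, colSet S v`. -/
def colSetU (S : A.Strategy) (U : Set A.V) : Set (ℕ → C) := ⋃ v ∈ U, A.colSet S v

/-- State of a memory structure after reading a list of edges. -/
def mstate {M : Type} (δ : M → A.E → M) (m0 : M) (es : List A.E) : M := es.foldl δ m0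

/-- `S` is implemented by the memory structure `(M, m0, δ)`: its moves depend only
on the current node and the current memory state. -/
def HasMemory (S : A.Strategy) (M : Type) (m0 : M) (δ : M → A.E → M) : Prop :=
  ∀ v1 es1 v2 es2, A.ptarget v1 es1 = A.ptarget v2 es2 →
    A.mstate δ m0 es1 = A.mstate δ m0 es2 → S v1 es1 = S v2 es2

/-- A memory structure is chromatic if transitions depend only on colors of edges. -/
def ChromaticMem (M : Type) (δ : M → A.E → M) : Prop :=
  ∃ σ : M → C → M, ∀ m e, δ m e = σ m (A.col e)

/-- `S` is a `q`-state strategy. -/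
def IsQState (S : A.Strategy) (q : ℕ) : Prop :=
  ∃ (M : Type) (_ : Fintype M) (m0 : M) (δ : M → A.E → M),
    Fintype.card M = q ∧ A.HasMemory S M m0 δ

/-- `S` is a chromatic `q`-state strategy. -/
def IsChromaticQState (S : A.Strategy) (q : ℕ) : Prop :=
  ∃ (M : Type) (_ : Fintype M) (m0 : M) (δ : M → A.E → M),
    Fintype.card M = q ∧ A.ChromaticMem M δ ∧ A.HasMemory S M m0 δ

end Arena

attribute [instance] Arena.finV Arena.finE

open Arena

/-!
Player 0 keeps a table that records, for every node `w`, one play of `S₁` ending in `w` and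
producing the colors seen so far, given by its starting node `u` and the memory of `S₁` at `w`;
among all candidates the update keeps one whose start is `≼`-maximal. The update reads only
colors, the table has `(qn + 1) ^ n` values, and following `S₁` from the entry at the current
node keeps that entry alive with a start that never decreases, hence stays `≽ v`. So an infinite
play of `S₂` from `v` has, for every `k`, a play of `S₁` from some `u ≽ v` sharing its first `k`
colors, and Kőnig's lemma turns these into an infinite one.
-/

theorem Set.Finite.exists_forall_rel_of_total {ι α : Type*} {r : α → α → Prop}
    (htrans : ∀ a b c, r a b → r b c → r a c) (htotal : ∀ a b, r a b ∨ r b a)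
    (f : ι → α) {s : Set ι} (hs : s.Finite) (hne : s.Nonempty) :
    ∃ i ∈ s, ∀ j ∈ s, r (f j) (f i) := by
  let _ : LE α := ⟨r⟩
  have : IsTrans α (· ≤ ·) := ⟨htrans⟩
  obtain ⟨i, hi, hmax⟩ := hs.exists_maximalFor f s hne
  exact ⟨i, hi, fun j hj => (htotal (f j) (f i)).elim id (hmax hj)⟩

namespace Arena

section Plays

variable {C : Type} {A : Arena C}

theorem ptarget_append_singleton (v : A.V) (p : List A.E) (e : A.E) :
    A.ptarget v (p ++ [e]) = A.target e := by
  simp [ptarget]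

theorem mstate_append_singleton {M : Type} (δ : M → A.E → M) (m₀ : M) (p : List A.E)
    (e : A.E) : A.mstate δ m₀ (p ++ [e]) = δ (A.mstate δ m₀ p) e := by
  simp [mstate]

theorem PathFrom.ptarget_eq {v w : A.V} {p : List A.E} (h : A.PathFrom v p w) :
    A.ptarget v p = w := by
  induction p generalizing v with
  | nil => exact h
  | cons e p ih => exact ih h.2

theorem pathFrom_append_singleton_iff {v w : A.V} {p : List A.E} {e : A.E} :
    A.PathFrom v (p ++ [e]) w ↔ A.PathFrom v p (A.source e) ∧ A.target e = w := by
  induction p generalizing v with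
  | nil => simp [PathFrom, eq_comm]
  | cons f p ih => simp [PathFrom, ih, and_assoc]

theorem consFrom_append_singleton_iff {S : A.Strategy} {v : A.V} {p : List A.E} {e : A.E} :
    A.ConsFrom S v (p ++ [e]) ↔ A.ConsFrom S v p ∧ (A.isP0 (A.ptarget v p) → e = S v p) := by
  constructor
  · intro h
    exact ⟨fun a e' b hab => h a e' (b ++ [e]) (by simp [hab]), h p e [] rfl⟩
  · rintro ⟨hp, he⟩ a e' b hab
    rcases b.eq_nil_or_concat with rfl | ⟨b, x, rfl⟩
    · obtain ⟨rfl, rfl⟩ : p = a ∧ e = e' := by simpa using hab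
      exact he
    · have hab' : p ++ [e] = (a ++ e' :: b) ++ [x] := by simpa using hab
      exact hp a e' b (List.append_inj' hab' rfl).1

theorem prefixList_succ (P : ℕ → A.E) (k : ℕ) :
    A.prefixList P (k + 1) = A.prefixList P k ++ [P k] := by
  rw [prefixList, List.ofFn_succ', List.concat_eq_append]
  rfl

theorem infPlay_iff_forall_pathFrom {v : A.V} {P : ℕ → A.E} :
    A.InfPlay v P ↔ ∀ k, A.PathFrom v (A.prefixList P k) (A.ptarget v (A.prefixList P k)) := by
  constructor
  · intro hP k
    induction k with
    | zero => rfl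
    | succ k ih =>
      have hsrc : A.source (P k) = A.ptarget v (A.prefixList P k) := by
        cases k with
        | zero => exact hP.1
        | succ k => rw [prefixList_succ, ptarget_append_singleton]; exact (hP.2 k).symm
      rw [prefixList_succ, pathFrom_append_singleton_iff, ptarget_append_singleton, hsrc]
      exact ⟨ih, rfl⟩
  · intro h
    refine ⟨?_, fun i => ?_⟩
    · have h₁ := h 1
      rw [prefixList_succ, pathFrom_append_singleton_iff] at h₁
      exact h₁.1.symm
    · have h₂ := h (i + 2)
      rw [prefixList_succ, pathFrom_append_singleton_iff, prefixList_succ,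
        pathFrom_append_singleton_iff] at h₂
      exact h₂.1.2

def IsConsPlay (S : A.Strategy) (u : A.V) (p : List A.E) : Prop :=
  A.PathFrom u p (A.ptarget u p) ∧ A.ConsFrom S u p

/-- Kőnig's lemma, in the guise of compactness of `A.V × (ℕ → A.E)` for discrete `A.V`, `A.E`. -/
theorem mem_colSetU_of_forall_exists_consPlay {S : A.Strategy} {U : Set A.V} {γ : ℕ → C}
    (h : ∀ k, ∃ u ∈ U, ∃ p, A.IsConsPlay S u p ∧ p.map A.col = List.ofFn fun i : Fin k => γ i) :
    γ ∈ A.colSetU S U := by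
  let _ : TopologicalSpace A.V := ⊥
  let _ : TopologicalSpace A.E := ⊥
  have : DiscreteTopology A.V := ⟨rfl⟩
  have : DiscreteTopology A.E := ⟨rfl⟩
  let K : ℕ → Set (A.V × (ℕ → A.E)) := fun k =>
    {x | x.1 ∈ U ∧ A.IsConsPlay S x.1 (A.prefixList x.2 k) ∧ ∀ i : Fin k, A.col (x.2 i) = γ i}
  have hanti : ∀ k, K (k + 1) ⊆ K k := by
    rintro k ⟨u, P⟩ ⟨hu, ⟨hpath, hcons⟩, hcol⟩
    rw [prefixList_succ, pathFrom_append_singleton_iff, ptarget_append_singleton] at hpath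
    rw [prefixList_succ, consFrom_append_singleton_iff] at hcons
    exact ⟨hu, ⟨hpath.1.ptarget_eq ▸ hpath.1, hcons.1⟩, fun i => hcol i.castSucc⟩
  have hne : ∀ k, (K k).Nonempty := by
    intro k
    obtain ⟨u, hu, p, hplay, hcol⟩ := h k
    have hlen : p.length = k := by simpa using congrArg List.length hcol
    let P : ℕ → A.E := fun i => p.getD i (A.out u).choose
    have hP : A.prefixList P k = p :=
      List.ext_getElem (by simp [prefixList, hlen]) fun i _ hi => by simp [P, prefixList, hi]
    rw [← hP, prefixList, List.map_ofFn, List.ofFn_inj] at hcol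
    exact ⟨(u, P), hu, hP ▸ hplay, congrFun hcol⟩
  have hclosed : ∀ k, IsClosed (K k) := fun k =>
    (isClosed_discrete {y : A.V × (Fin k → A.E) |
      y.1 ∈ U ∧ A.IsConsPlay S y.1 (List.ofFn y.2) ∧ ∀ i, A.col (y.2 i) = γ i}).preimage
      (f := fun x : A.V × (ℕ → A.E) => (x.1, fun i : Fin k => x.2 i)) (by fun_prop)
  obtain ⟨⟨u, P⟩, hP⟩ := IsCompact.nonempty_iInter_of_sequence_nonempty_isCompact_isClosed
    K hanti hne (hclosed 0).isCompact hclosed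
  rw [Set.mem_iInter] at hP
  exact Set.mem_biUnion (hP 0).1 ⟨P, infPlay_iff_forall_pathFrom.2 fun k => (hP k).2.1.1,
    fun k => (hP k).2.1.2, funext fun i => ((hP (i + 1)).2.2 (Fin.last i)).symm⟩

end Plays

section Construction

variable {C : Type} (A : Arena C) {M : Type} (S : A.Strategy) (m₀ : M) (δ : M → A.E → M)
  (pre : A.V → A.V → Prop)

open Classical in
noncomputable def moveAt (w : A.V) (m : M) : A.E :=
  if h : ∃ x : A.V × List A.E, A.ptarget x.1 x.2 = w ∧ A.mstate δ m₀ x.2 = m then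
    S h.choose.1 h.choose.2
  else (A.out w).choose

def extensions (T : A.V → Option (A.V × M)) (c : C) (w' : A.V) : Set (A.V × M) :=
  {x | ∃ w m e, T w = some (x.1, m) ∧ A.source e = w ∧ A.target e = w' ∧ A.col e = c ∧
    (A.isP0 w → e = A.moveAt S m₀ δ w m) ∧ x.2 = δ m e}

open Classical in
noncomputable def updateTable (T : A.V → Option (A.V × M)) (c : C) : A.V → Option (A.V × M) :=
  fun w' => if h : ∃ x ∈ A.extensions S m₀ δ T c w', ∀ y ∈ A.extensions S m₀ δ T c w', pre y.1 x.1
    then some h.choose else none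

/-- An entry `w ↦ some (u, m)` stands for a play of `S` from `u` to `w`, ending in memory state `m`,
with the colors of `es`; see `exists_consPlay_of_table_eq_some`. -/
noncomputable def table (es : List A.E) : A.V → Option (A.V × M) :=
  A.mstate (fun T e => A.updateTable S m₀ δ pre T (A.col e)) (fun u => some (u, m₀)) es

/-- The default `m₀` is never used along plays consistent with this strategy. -/
noncomputable def chromaticStrategy : A.Strategy := fun v es =>
  A.moveAt S m₀ δ (A.ptarget v es)
    (((A.table S m₀ δ pre es (A.ptarget v es)).map Prod.snd).getD m₀)

variable {A S m₀ δ pre}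

theorem source_moveAt (hS : A.IsStrategy S) (w : A.V) (m : M) :
    A.source (A.moveAt S m₀ δ w m) = w := by
  unfold moveAt
  split_ifs with h
  · rw [hS]
    exact h.choose_spec.1
  · exact (A.out w).choose_spec

theorem HasMemory.eq_moveAt (hS : A.HasMemory S M m₀ δ) (v : A.V) (es : List A.E) :
    S v es = A.moveAt S m₀ δ (A.ptarget v es) (A.mstate δ m₀ es) := by
  have h : ∃ x : A.V × List A.E, A.ptarget x.1 x.2 = A.ptarget v es ∧
      A.mstate δ m₀ x.2 = A.mstate δ m₀ es := ⟨(v, es), rfl, rfl⟩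
  rw [moveAt, dif_pos h]
  exact hS _ _ _ _ h.choose_spec.1.symm h.choose_spec.2.symm

theorem mem_extensions_of_updateTable_eq_some {T : A.V → Option (A.V × M)} {c : C} {w' : A.V}
    {x : A.V × M} (h : A.updateTable S m₀ δ pre T c w' = some x) :
    x ∈ A.extensions S m₀ δ T c w' := by
  unfold updateTable at h
  split_ifs at h with hx
  exact Option.some_injective _ h ▸ hx.choose_spec.1

theorem exists_updateTable_eq_some [Finite M] (htrans : ∀ u v w, pre u v → pre v w → pre u w)
    (htotal : ∀ u v, pre u v ∨ pre v u) {T : A.V → Option (A.V × M)} {c : C} {w' : A.V}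
    {x : A.V × M} (hx : x ∈ A.extensions S m₀ δ T c w') :
    ∃ y, A.updateTable S m₀ δ pre T c w' = some y ∧ pre x.1 y.1 := by
  have h : ∃ y ∈ A.extensions S m₀ δ T c w', ∀ z ∈ A.extensions S m₀ δ T c w', pre z.1 y.1 :=
    (Set.toFinite _).exists_forall_rel_of_total htrans htotal Prod.fst ⟨x, hx⟩
  exact ⟨h.choose, dif_pos h, h.choose_spec.2 x hx⟩

theorem table_append_singleton (es : List A.E) (e : A.E) :
    A.table S m₀ δ pre (es ++ [e]) = A.updateTable S m₀ δ pre (A.table S m₀ δ pre es) (A.col e) :=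
  mstate_append_singleton _ _ _ _

theorem exists_consPlay_of_table_eq_some (hS : A.HasMemory S M m₀ δ) {es : List A.E}
    {w u : A.V} {m : M} (h : A.table S m₀ δ pre es w = some (u, m)) :
    ∃ p, A.PathFrom u p w ∧ A.ConsFrom S u p ∧ A.mstate δ m₀ p = m ∧
      p.map A.col = es.map A.col := by
  induction es using List.reverseRecOn generalizing w u m with
  | nil =>
    obtain ⟨rfl, rfl⟩ : w = u ∧ m₀ = m := by simpa [table, mstate] using h
    exact ⟨[], rfl, fun _ _ _ h => by simp at h, rfl, rfl⟩
  | append_singleton es e ih =>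
    rw [table_append_singleton] at h
    obtain ⟨w₀, m', e', hT, hsrc, rfl, hcol, hmove, rfl⟩ := mem_extensions_of_updateTable_eq_some h
    obtain ⟨p, hpath, hcons, hmem, hcols⟩ := ih hT
    have hmove' : A.isP0 (A.ptarget u p) → e' = S u p := by
      rw [hS.eq_moveAt, hpath.ptarget_eq, hmem]
      exact hmove
    exact ⟨p ++ [e'], pathFrom_append_singleton_iff.2 ⟨hsrc ▸ hpath, rfl⟩,
      consFrom_append_singleton_iff.2 ⟨hcons, hmove'⟩, by rw [mstate_append_singleton, hmem],
      by simp [hcols, hcol]⟩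

theorem exists_table_eq_some_of_consFrom [Finite M] (hrefl : ∀ v, pre v v)
    (htrans : ∀ u v w, pre u v → pre v w → pre u w) (htotal : ∀ u v, pre u v ∨ pre v u)
    {v w : A.V} {es : List A.E} (hpath : A.PathFrom v es w)
    (hcons : A.ConsFrom (A.chromaticStrategy S m₀ δ pre) v es) :
    ∃ u m, A.table S m₀ δ pre es w = some (u, m) ∧ pre v u := by
  induction es using List.reverseRecOn generalizing w with
  | nil =>
    subst hpath
    exact ⟨v, m₀, rfl, hrefl v⟩
  | append_singleton es e ih =>
    obtain ⟨hpath', rfl⟩ := pathFrom_append_singleton_iff.1 hpath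
    obtain ⟨hcons', hmove⟩ := consFrom_append_singleton_iff.1 hcons
    obtain ⟨u, m, hT, hvu⟩ := ih hpath' hcons'
    have hext :
        (u, δ m e) ∈ A.extensions S m₀ δ (A.table S m₀ δ pre es) (A.col e) (A.target e) := by
      refine ⟨_, m, e, hT, rfl, rfl, rfl, fun hP0 => ?_, rfl⟩
      simpa [chromaticStrategy, hpath'.ptarget_eq, hT] using hmove (hpath'.ptarget_eq ▸ hP0)
    obtain ⟨y, hy, huy⟩ := exists_updateTable_eq_some htrans htotal hext
    exact ⟨y.1, y.2, by rw [table_append_singleton, hy], htrans _ _ _ hvu huy⟩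

theorem hasMemory_chromaticStrategy :
    A.HasMemory (A.chromaticStrategy S m₀ δ pre) (A.V → Option (A.V × M))
      (fun u => some (u, m₀)) (fun T e => A.updateTable S m₀ δ pre T (A.col e)) := by
  intro v₁ es₁ v₂ es₂ h₁ h₂
  simp only [chromaticStrategy, table, h₁, h₂]

end Construction

end Arena

theorem chromatic_upper_bound_preorder_general {C : Type} (n q : ℕ)
    (A : Arena C) (hcard : Fintype.card A.V = n)
    (pre : A.V → A.V → Prop)
    (hrefl : ∀ v, pre v v)
    (htrans : ∀ u v w, pre u v → pre v w → pre u w)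
    (htotal : ∀ u v, pre u v ∨ pre v u)
    (S₁ : A.Strategy) (hS₁ : A.IsStrategy S₁) (hq₁ : A.IsQState S₁ q) :
    ∃ S₂ : A.Strategy, A.IsStrategy S₂ ∧ A.IsChromaticQState S₂ ((q * n + 1) ^ n) ∧
      ∀ v : A.V, A.colSet S₂ v ⊆ ⋃ u ∈ {u : A.V | pre v u}, A.colSet S₁ u := by
  classical
  obtain ⟨M, _, m₀, δ, hM, hmem⟩ := hq₁
  refine ⟨A.chromaticStrategy S₁ m₀ δ pre, fun v es => source_moveAt hS₁ _ _,
    ⟨_, inferInstance, _, _, ?_, ⟨_, fun _ _ => rfl⟩, hasMemory_chromaticStrategy⟩, ?_⟩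
  · simp [hcard, hM, mul_comm]
  · rintro v _ ⟨P, hP, hcons, rfl⟩
    refine mem_colSetU_of_forall_exists_consPlay fun k => ?_
    obtain ⟨u, m, hT, hvu⟩ := exists_table_eq_some_of_consFrom hrefl htrans htotal
      (infPlay_iff_forall_pathFrom.1 hP k) (hcons k)
    obtain ⟨p, hpath, hpcons, -, hcol⟩ := exists_consPlay_of_table_eq_some hmem hT
    refine ⟨u, hvu, p, ⟨by rwa [hpath.ptarget_eq], hpcons⟩, ?_⟩
    rw [hcol, prefixList, List.map_ofFn]
    rfl

/-- For every `n, q ≥ 1`, every arena with `n` nodes, every total preorder `≼`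
on its nodes, and every `q`-state strategy `S₁` of Player 0, there exists a
chromatic `(qn+1)^n`-state strategy `S₂` such that for every node `v`,
`col(S₂, v) ⊆ ⋃_{u : v ≼ u} col(S₁, u)`. -/
theorem chromatic_upper_bound_preorder {C : Type} (n q : ℕ) (hn : 1 ≤ n) (hq : 1 ≤ q)
    (A : Arena C) (hcard : Fintype.card A.V = n)
    (pre : A.V → A.V → Prop)
    (hrefl : ∀ v, pre v v)
    (htrans : ∀ u v w, pre u v → pre v w → pre u w)
    (htotal : ∀ u v, pre u v ∨ pre v u)
    (S₁ : A.Strategy) (hS₁ : A.IsStrategy S₁) (hq₁ : A.IsQState S₁ q) :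
    ∃ S₂ : A.Strategy, A.IsStrategy S₂ ∧ A.IsChromaticQState S₂ ((q * n + 1) ^ n) ∧
      ∀ v : A.V, A.colSet S₂ v ⊆ ⋃ u ∈ {u : A.V | pre v u}, A.colSet S₁ u :=
  chromatic_upper_bound_preorder_general n q A hcard pre hrefl htrans htotal S₁ hS₁ hq₁
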